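/- arXiv:1608.01507 — 2 statements merged into one kernel-verified Lean document; each statement's English description precedes it below -/
import Mathlib

section
/- Let h, ν₁, ν₂, ν₃ ∈ ℝ. Define H₁(x,y,z) = (x² + y²)/2 and H₂(x,y,z) = (y² + z²)/2 on ℝ³, and for y ≠ 0 let G(x,y,z) be the symmetric 3×3 matrix with rows (ν₁, −h, 0), (−h, ν₂, zν₃/y), (0, zν₃/y, 0). Then at every point (x,y,z) ∈ ℝ³ with y ≠ 0, the vector field of the Rabinovich system satisfies the metriplectic identity (hy − ν₁x + yz, hx − ν₂y − xz, −ν₃z + xy) = ∇H₁(x,y,z) × ∇H₂(x,y,z) − G(x,y,z) ∇H₁(x,y,z), where × is the cross product in ℝ³ and ∇ the gradient. -/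
open Matrix

/-- The gradient of a function of three real variables, as a vector of
partial derivatives. -/
noncomputable def grad (H : ℝ → ℝ → ℝ → ℝ) (x y z : ℝ) : Fin 3 → ℝ :=
  ![deriv (fun s => H s y z) x, deriv (fun s => H x s z) y, deriv (fun s => H x y s) z]

theorem grad_sq_add_sq_div_two_xy (x y z : ℝ) :
    grad (fun x y _ => (x ^ 2 + y ^ 2) / 2) x y z = ![x, y, 0] := by
  simp [grad]

theorem grad_sq_add_sq_div_two_yz (x y z : ℝ) :
    grad (fun _ y z => (y ^ 2 + z ^ 2) / 2) x y z = ![0, y, z] := by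
  simp [grad]

/-- Metriplectic formulation of the Rabinovich system (at points with y ≠ 0):
`X = ∇H₁ × ∇H₂ - G ∇H₁` with `H₁ = (x² + y²)/2`, `H₂ = (y² + z²)/2` and
`G` the symmetric matrix with rows `(ν₁, -h, 0)`, `(-h, ν₂, zν₃/y)`,
`(0, zν₃/y, 0)`. -/
theorem rabinovich_metriplectic (h ν₁ ν₂ ν₃ : ℝ) :
    ∀ x y z : ℝ, y ≠ 0 →
      ![h * y - ν₁ * x + y * z, h * x - ν₂ * y - x * z, -ν₃ * z + x * y] =
        (grad (fun x y z => (x ^ 2 + y ^ 2) / 2) x y z) ⨯₃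
            (grad (fun x y z => (y ^ 2 + z ^ 2) / 2) x y z) -
          (!![ν₁, -h, 0; -h, ν₂, z * ν₃ / y; 0, z * ν₃ / y, 0] :
              Matrix (Fin 3) (Fin 3) ℝ).mulVec
            (grad (fun x y z => (x ^ 2 + y ^ 2) / 2) x y z) := by
  intro x y z hy
  rw [grad_sq_add_sq_div_two_xy, grad_sq_add_sq_div_two_yz]
  ext i
  fin_cases i <;> simp [cross_apply, mul_div_cancel₀ _ hy] <;> ring
end

section
/- Consider the reduced Hindmarsh–Rose system ẋ = y − z + bx² + α, ẏ = β − dx² − y, ż = px − rz − γ with β, γ, r, b, d arbitrary real parameters subject to b ≠ 0, d ≠ 0, d − b + br ≠ 0, −d + 2b + br ≠ 0, and with α = −b(γd + βd − bβ + rβb)/(d(d − b + br)) and p = (b − d)(d − b + br)/b². Set A = −(b−d)(d−b+br)/(b(−d+2b+br)), B = −b(b−d)(d−b+br)/(d²(−d+2b+br)), C = −b(b−d)/((d−b+br)(−d+2b+br)), E = −2(b−d)(d−b+br)/(d(−d+2b+br)), F = 2(b−d)/(−d+2b+br), G = 2b(b−d)/(d(−d+2b+br)). Then for every differentiable solution (x(t),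 y(t), z(t)), the function t ↦ e^{(2(b−d)/b)t}(A x(t)² + B y(t)² + C z(t)² + E x(t)y(t) + F x(t)z(t) + G y(t)z(t)) is constant; that is, I = e^{(2(b−d)/b)t}(Ax² + By² + Cz² + Exy + Fxz + Gyz) is a first integral. -/
/-!
The quadratic form `Q = Ax² + By² + Cz² + Exy + Fxz + Gyz` is a Darboux polynomial of the
vector field with constant cofactor `-2(b - d)/b`: its derivative along any solution is
`-(2(b - d)/b) Q`. Hence `e^{(2(b-d)/b) t} Q` has derivative zero and is constant.
-/

open Real

def quadForm (A B C E F G X Y Z : ℝ) : ℝ :=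
  A * X ^ 2 + B * Y ^ 2 + C * Z ^ 2 + E * X * Y + F * X * Z + G * Y * Z

theorem hasDerivAt_quadForm (A B C E F G : ℝ) {x y z : ℝ → ℝ} {x' y' z' t : ℝ}
    (hx : HasDerivAt x x' t) (hy : HasDerivAt y y' t) (hz : HasDerivAt z z' t) :
    HasDerivAt (fun t => quadForm A B C E F G (x t) (y t) (z t))
      (2 * A * x t * x' + 2 * B * y t * y' + 2 * C * z t * z' + E * (x' * y t + x t * y') +
        F * (x' * z t + x t * z') + G * (y' * z t + y t * z')) t := by
  unfold quadForm
  have hsum := (((((hx.fun_pow 2).const_mul A).fun_add ((hy.fun_pow 2).const_mul B)).fun_add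
    ((hz.fun_pow 2).const_mul C)).fun_add ((hx.fun_mul hy).const_mul E)).fun_add
    ((hx.fun_mul hz).const_mul F) |>.fun_add ((hy.fun_mul hz).const_mul G)
  refine (hsum.congr_deriv ?_).congr_of_eventuallyEq (.of_forall fun u => ?_)
  · norm_num
    ring
  · ring

theorem exp_mul_eq_of_hasDerivAt_eq_neg_mul {Q : ℝ → ℝ} {k : ℝ}
    (hQ : ∀ t, HasDerivAt Q (-(k * Q t)) t) (s t : ℝ) :
    exp (k * s) * Q s = exp (k * t) * Q t := by
  have hderiv : ∀ u, HasDerivAt (fun u => exp (k * u) * Q u) 0 u := fun u => by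
    have hexp : HasDerivAt (fun u => exp (k * u)) (exp (k * u) * k) u :=
      ((hasDerivAt_id u).const_mul k).exp.congr_deriv (by simp)
    exact (hexp.mul (hQ u)).congr_deriv (by ring)
  exact is_const_of_deriv_eq_zero (fun u => (hderiv u).differentiableAt)
    (fun u => (hderiv u).deriv) s t

theorem hindmarsh_rose_quadForm_cofactor {α β γ b d p r A B C E F G : ℝ}
    (hb : b ≠ 0) (hd : d ≠ 0) (h1 : d - b + b * r ≠ 0) (h2 : -d + 2 * b + b * r ≠ 0)
    (hα : α = -(b * (γ * d + β * d - b * β + r * β * b)) / (d * (d - b + b * r)))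
    (hp : p = (b - d) * (d - b + b * r) / b ^ 2)
    (hA : A = -((b - d) * (d - b + b * r)) / (b * (-d + 2 * b + b * r)))
    (hB : B = -(b * (b - d) * (d - b + b * r)) / (d ^ 2 * (-d + 2 * b + b * r)))
    (hC : C = -(b * (b - d)) / ((d - b + b * r) * (-d + 2 * b + b * r)))
    (hE : E = -2 * ((b - d) * (d - b + b * r)) / (d * (-d + 2 * b + b * r)))
    (hF : F = 2 * (b - d) / (-d + 2 * b + b * r))
    (hG : G = 2 * (b * (b - d)) / (d * (-d + 2 * b + b * r)))
    {X Y Z X' Y' Z' : ℝ} (hX' : X' = Y - Z + b * X ^ 2 + α) (hY' : Y' = β - d * X ^ 2 - Y)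
    (hZ' : Z' = p * X - r * Z - γ) :
    2 * A * X * X' + 2 * B * Y * Y' + 2 * C * Z * Z' + E * (X' * Y + X * Y') +
        F * (X' * Z + X * Z') + G * (Y' * Z + Y * Z') =
      -(2 * (b - d) / b * quadForm A B C E F G X Y Z) := by
  subst hα hp hA hB hC hE hF hG hX' hY' hZ'
  unfold quadForm
  field_simp
  ring

/-- Reduced Hindmarsh-Rose system, quadratic first integral:
with `α = -b(γd + βd - bβ + rβb)/(d(d - b + br))` and
`p = (b - d)(d - b + br)/b²`, the function
`I = e^{(2(b-d)/b)t}(Ax² + By² + Cz² + Exy + Fxz + Gyz)` is a first integral. -/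
theorem hindmarsh_rose_case5 (α β γ b d p r : ℝ)
    (hb : b ≠ 0) (hd : d ≠ 0) (h1 : d - b + b * r ≠ 0) (h2 : -d + 2 * b + b * r ≠ 0)
    (hα : α = -(b * (γ * d + β * d - b * β + r * β * b)) / (d * (d - b + b * r)))
    (hp : p = (b - d) * (d - b + b * r) / b ^ 2)
    (A B C E F G : ℝ)
    (hA : A = -((b - d) * (d - b + b * r)) / (b * (-d + 2 * b + b * r)))
    (hB : B = -(b * (b - d) * (d - b + b * r)) / (d ^ 2 * (-d + 2 * b + b * r)))
    (hC : C = -(b * (b - d)) / ((d - b + b * r) * (-d + 2 * b + b * r)))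
    (hE : E = -2 * ((b - d) * (d - b + b * r)) / (d * (-d + 2 * b + b * r)))
    (hF : F = 2 * (b - d) / (-d + 2 * b + b * r))
    (hG : G = 2 * (b * (b - d)) / (d * (-d + 2 * b + b * r)))
    (x y z : ℝ → ℝ)
    (hx : ∀ t, HasDerivAt x (y t - z t + b * (x t) ^ 2 + α) t)
    (hy : ∀ t, HasDerivAt y (β - d * (x t) ^ 2 - y t) t)
    (hz : ∀ t, HasDerivAt z (p * x t - r * z t - γ) t) :
    ∀ s t : ℝ,
      Real.exp (2 * (b - d) / b * s) *
          (A * (x s) ^ 2 + B * (y s) ^ 2 + C * (z s) ^ 2 +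
            E * x s * y s + F * x s * z s + G * y s * z s) =
        Real.exp (2 * (b - d) / b * t) *
          (A * (x t) ^ 2 + B * (y t) ^ 2 + C * (z t) ^ 2 +
            E * x t * y t + F * x t * z t + G * y t * z t) :=
  exp_mul_eq_of_hasDerivAt_eq_neg_mul (Q := fun t => quadForm A B C E F G (x t) (y t) (z t))
    fun u => (hasDerivAt_quadForm A B C E F G (hx u) (hy u) (hz u)).congr_deriv
      (hindmarsh_rose_quadForm_cofactor hb hd h1 h2 hα hp hA hB hC hE hF hG rfl rfl rfl)
end
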